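/- (Random matrices have logarithmic height.) There exists a constant C > 0 such that, for A drawn uniformly at random from total sign matrices {−1,1}^{N×N}, the probability that h(A) > C·log₂ N tends to 0 as N → ∞. (Combined with the chain-height bound, this gives ind_{ℤ₂}(S(A)) ≤ 2C·log₂ N with probability 1 − o(1), while srank(A) = Ω(N).) -/

import Mathlib

/-!
A strict chain `S₁ ⊊ ⋯ ⊊ S_{2a}` in `I(A)` produces an `a × a` submatrix all of whose rows are
constant. Indeed `S_a` has at least `a` elements, and every step `S_t ⊊ S_{t+1}` with `t ≥ a` is
witnessed by a row that is constant on `S_t` (a generator of `S_t` missing a new point) but not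
on `S_{t+1}`; so the sets of rows constant on `S_t` strictly decrease and at least `a` rows are
constant on `S_a`. A fixed `a × a` submatrix has constant rows with probability `2^(a - a²)`, and
a union bound over at most `N^(2a)` submatrices with `a = 4⌈log₂ N⌉` gives probability at most
`1/N` that the height exceeds `16 log₂ N`.
-/

/-- The intersection family `I(A)` of a sign matrix: all nonempty sets
expressible as an intersection of finitely many (at least one) of the sets
`R_i^+ = {j : A i j = 1}` and `R_i^- = {j : A i j = -1}`. -/
def interFamily {N : ℕ} (A : Fin N → Fin N → ℤ) : Set (Set (Fin N)) :=
  {S | S.Nonempty ∧ ∃ F : Finset (Fin N × Bool), F.Nonempty ∧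
    S = ⋂ p ∈ F, {j | A p.1 j = if p.2 then 1 else -1}}

/-- The height `h(A)`: the maximum length of a strictly increasing chain in
the intersection family `I(A)`. -/
noncomputable def matHeight {N : ℕ} (A : Fin N → Fin N → ℤ) : ℕ :=
  sSup {k | ∃ c : Fin k → Set (Fin N), StrictMono c ∧ ∀ t, c t ∈ interFamily A}

open Finset MeasureTheory Filter Function
open scoped ENNReal

lemma StrictMono.apply_add_sub_le {k : ℕ} {f : Fin k → ℕ} (hf : StrictMono f) {i j : Fin k}
    (hij : i ≤ j) : f i + (j - i : ℕ) ≤ f j := by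
  have := card_le_card_of_injOn f (s := Icc i j) (t := Icc (f i) (f j))
    (by simpa only [coe_Icc] using hf.monotone.mapsTo_Icc) hf.injective.injOn
  simp only [Fin.card_Icc, Nat.card_Icc] at this
  omega

lemma StrictAnti.apply_add_sub_le {k : ℕ} {f : Fin k → ℕ} (hf : StrictAnti f) {i j : Fin k}
    (hij : i ≤ j) : f j + (j - i : ℕ) ≤ f i := by
  have := (hf.comp Fin.rev_strictAnti).apply_add_sub_le (Fin.rev_le_rev.mpr hij)
  simp only [comp_apply, Fin.rev_rev, Fin.val_rev] at this
  omega

section RowConstantMinor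

variable {α β : Type*}

def rowsConstantOn (B : α → β → Bool) (S : Set β) : Set α :=
  {r | ∃ b, ∀ y ∈ S, B r y = b}

def HasRowConstantMinor (B : α → β → Bool) (a : ℕ) : Prop :=
  ∃ (i : Fin a → α) (x : Fin a → β) (ε : Fin a → Bool),
    Injective i ∧ Injective x ∧ ∀ u s, B (i u) (x s) = ε u

lemma rowsConstantOn_anti (B : α → β → Bool) {S T : Set β} (hST : S ⊆ T) :
    rowsConstantOn B T ⊆ rowsConstantOn B S :=
  fun _ ⟨b, hb⟩ => ⟨b, fun y hy => hb y (hST hy)⟩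

lemma hasRowConstantMinor_of_le_ncard [Finite α] [Finite β] {B : α → β → Bool} {a : ℕ}
    {S : Set β} (hS : a ≤ S.ncard) (hR : a ≤ (rowsConstantOn B S).ncard) :
    HasRowConstantMinor B a := by
  classical
  have : Fintype α := Fintype.ofFinite α
  have : Fintype β := Fintype.ofFinite β
  obtain ⟨x⟩ := Function.Embedding.nonempty_of_card_le (α := Fin a) (β := S)
    (by simpa [Set.ncard_eq_toFinset_card'] using hS)
  obtain ⟨i⟩ := Function.Embedding.nonempty_of_card_le (α := Fin a) (β := rowsConstantOn B S)
    (by simpa [Set.ncard_eq_toFinset_card'] using hR)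
  choose ε hε using fun u => (i u).2
  exact ⟨fun u => i u, fun s => x s, ε, Subtype.val_injective.comp i.injective,
    Subtype.val_injective.comp x.injective, fun u s => hε u _ (x s).2⟩

end RowConstantMinor

section SignMatrix

variable {N : ℕ}

abbrev signMatrix (B : Fin N → Fin N → Bool) : Fin N → Fin N → ℤ :=
  fun i j => if B i j then 1 else -1

lemma exists_row_separating_of_mem_interFamily {B : Fin N → Fin N → Bool} {S : Set (Fin N)}
    (hS : S ∈ interFamily (signMatrix B)) {j : Fin N} (hj : j ∉ S) :
    ∃ r b, (∀ y ∈ S, B r y = b) ∧ B r j ≠ b := by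
  obtain ⟨-, F, -, rfl⟩ := hS
  simp only [Set.mem_iInter, not_forall] at hj
  obtain ⟨⟨r, b⟩, hrb, hj⟩ := hj
  refine ⟨r, b, fun y hy => ?_, fun h => hj ?_⟩
  · have := Set.mem_iInter₂.mp hy (r, b) hrb
    cases b <;> simpa using this
  · cases b <;> simp [h]

lemma rowsConstantOn_ssubset_of_ssubset {B : Fin N → Fin N → Bool} {S T : Set (Fin N)}
    (hS : S ∈ interFamily (signMatrix B)) (hST : S ⊂ T) :
    rowsConstantOn B T ⊂ rowsConstantOn B S := by
  obtain ⟨j, hjT, hjS⟩ := Set.exists_of_ssubset hST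
  obtain ⟨r, b, hr, hrj⟩ := exists_row_separating_of_mem_interFamily hS hjS
  obtain ⟨y, hy⟩ := hS.1
  refine Set.ssubset_iff_subset_ne.mpr ⟨rowsConstantOn_anti B hST.subset, fun h => ?_⟩
  obtain ⟨b', hb'⟩ : r ∈ rowsConstantOn B T := by rw [h]; exact ⟨b, hr⟩
  exact hrj ((hb' j hjT).trans ((hb' y (hST.subset hy)).symm.trans (hr y hy)))

lemma exists_chain_matHeight (A : Fin N → Fin N → ℤ) :
    ∃ c : Fin (matHeight A) → Set (Fin N), StrictMono c ∧ ∀ t, c t ∈ interFamily A := by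
  refine Nat.sSup_mem (s := {k | ∃ c : Fin k → Set (Fin N), StrictMono c ∧
    ∀ t, c t ∈ interFamily A}) ⟨0, Fin.elim0, fun t => t.elim0, fun t => t.elim0⟩
    ⟨Fintype.card (Set (Fin N)), ?_⟩
  rintro k ⟨c, hc, -⟩
  simpa using Fintype.card_le_of_injective c hc.injective

lemma hasRowConstantMinor_of_two_mul_le_matHeight {B : Fin N → Fin N → Bool} {a : ℕ}
    (ha : 2 * a ≤ matHeight (signMatrix B)) : HasRowConstantMinor B a := by
  obtain ⟨c, hc, hmem⟩ := exists_chain_matHeight (signMatrix B)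
  rcases Nat.eq_zero_or_pos a with rfl | ha0
  · exact ⟨Fin.elim0, Fin.elim0, Fin.elim0, fun u => u.elim0, fun s => s.elim0,
      fun u => u.elim0⟩
  let first : Fin (matHeight (signMatrix B)) := ⟨0, by omega⟩
  let mid : Fin (matHeight (signMatrix B)) := ⟨a - 1, by omega⟩
  let last : Fin (matHeight (signMatrix B)) := ⟨matHeight (signMatrix B) - 1, by omega⟩
  have hcols : (c first).ncard + (a - 1 - 0) ≤ (c mid).ncard :=
    (show StrictMono fun t => (c t).ncard from fun s t hst => Set.ncard_lt_ncard (hc hst))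
      |>.apply_add_sub_le (Fin.mk_le_mk.mpr (Nat.zero_le _))
  have hrows : (rowsConstantOn B (c last)).ncard + (matHeight (signMatrix B) - 1 - (a - 1))
      ≤ (rowsConstantOn B (c mid)).ncard :=
    (show StrictAnti fun t => (rowsConstantOn B (c t)).ncard from fun s t hst =>
      Set.ncard_lt_ncard (rowsConstantOn_ssubset_of_ssubset (hmem s) (hc hst)))
      |>.apply_add_sub_le (Fin.mk_le_mk.mpr (by omega))
  have hfirst : 0 < (c first).ncard := (hmem first).1.ncard_pos
  exact hasRowConstantMinor_of_le_ncard (S := c mid) (by omega) (by omega)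

end SignMatrix

section UniformBound

variable {α β : Type*} [Fintype α] [Fintype β] [DecidableEq α] [DecidableEq β]

lemma uniform_rowPattern_le {a : ℕ} {i : Fin a → α} {x : Fin a → β} (hi : Injective i)
    (hx : Injective x) (ε : Fin a → Bool) :
    (PMF.uniformOfFintype (α → β → Bool)).toMeasure {B | ∀ u s, B (i u) (x s) = ε u}
      ≤ ((2 : ℝ≥0∞) ^ (a * a))⁻¹ := by
  let P : Finset (α × β) := univ.image (Prod.map i x)
  have hP : P.card = a * a := by simp [P, card_image_of_injective _ (hi.prodMap hx)]
  have hrestrict : Injective fun (B : {B : α → β → Bool // ∀ u s, B (i u) (x s) = ε u})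
      (p : {p // p ∉ P}) => B.1 p.1.1 p.1.2 := by
    rintro ⟨B₁, h₁⟩ ⟨B₂, h₂⟩ h
    ext r y
    by_cases hry : (r, y) ∈ P
    · obtain ⟨⟨u, s⟩, -, hus⟩ := mem_image.mp hry
      simp only [Prod.map, Prod.mk.injEq] at hus
      rw [← hus.1, ← hus.2]
      exact (h₁ u s).trans (h₂ u s).symm
    · exact congrFun h ⟨(r, y), hry⟩
  have hcard : Fintype.card {B : α → β → Bool // ∀ u s, B (i u) (x s) = ε u} * 2 ^ (a * a)
      ≤ 2 ^ (Fintype.card α * Fintype.card β) := by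
    calc _ ≤ 2 ^ Fintype.card {p // p ∉ P} * 2 ^ P.card := by
          rw [hP]; gcongr; simpa using Fintype.card_le_of_injective _ hrestrict
      _ = 2 ^ (Fintype.card α * Fintype.card β) := by
          rw [← pow_add, Fintype.card_subtype_compl, Fintype.card_coe,
            Nat.sub_add_cancel (card_le_univ P), Fintype.card_prod]
  rw [PMF.toMeasure_uniformOfFintype_apply (s := {B : α → β → Bool | ∀ u s, B (i u) (x s) = ε u})
      (Set.toFinite _).measurableSet,
    Fintype.card_fun, Fintype.card_fun, Fintype.card_bool, ← pow_mul, mul_comm (Fintype.card β)]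
  refine ENNReal.div_le_of_le_mul ?_
  rw [← ENNReal.div_eq_inv_mul, ENNReal.le_div_iff_mul_le (by simp) (by simp)]
  exact_mod_cast hcard

lemma uniform_hasRowConstantMinor_le (a : ℕ) :
    (PMF.uniformOfFintype (α → β → Bool)).toMeasure {B | HasRowConstantMinor B a}
      ≤ Fintype.card α ^ a * Fintype.card β ^ a * 2 ^ a * ((2 : ℝ≥0∞) ^ (a * a))⁻¹ := by
  let pattern : (Fin a → α) × (Fin a → β) × (Fin a → Bool) → Set (α → β → Bool) :=
    fun ⟨i, x, ε⟩ => {B | Injective i ∧ Injective x ∧ ∀ u s, B (i u) (x s) = ε u}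
  have hpattern : ∀ cfg, (PMF.uniformOfFintype (α → β → Bool)).toMeasure (pattern cfg)
      ≤ ((2 : ℝ≥0∞) ^ (a * a))⁻¹ := by
    rintro ⟨i, x, ε⟩
    by_cases h : Injective i ∧ Injective x
    · exact (measure_mono fun B hB => hB.2.2).trans (uniform_rowPattern_le h.1 h.2 ε)
    · rw [show pattern (i, x, ε) = ∅ from
        Set.eq_empty_of_forall_notMem fun B hB => h ⟨hB.1, hB.2.1⟩, measure_empty]
      exact zero_le
  calc _ = (PMF.uniformOfFintype (α → β → Bool)).toMeasure (⋃ cfg, pattern cfg) := by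
        congr 1; ext B; simp [HasRowConstantMinor, pattern]
    _ ≤ ∑ cfg, (PMF.uniformOfFintype (α → β → Bool)).toMeasure (pattern cfg) :=
        measure_iUnion_fintype_le _ _
    _ ≤ ∑ _cfg, ((2 : ℝ≥0∞) ^ (a * a))⁻¹ := sum_le_sum fun cfg _ => hpattern cfg
    _ = _ := by simp [mul_assoc]

end UniformBound

lemma minor_union_bound_le_inv {x : ℝ≥0∞} {L : ℕ} (hx : x ≤ 2 ^ L) :
    x ^ (4 * L) * x ^ (4 * L) * 2 ^ (4 * L) * ((2 : ℝ≥0∞) ^ (4 * L * (4 * L)))⁻¹ ≤ x⁻¹ := by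
  rw [ENNReal.le_inv_iff_mul_le]
  calc _ ≤ ((2 : ℝ≥0∞) ^ L) ^ (4 * L) * (2 ^ L) ^ (4 * L) * 2 ^ (4 * L)
        * (2 ^ (4 * L * (4 * L)))⁻¹ * 2 ^ L := by gcongr
    _ = 2 ^ (L * (4 * L) + L * (4 * L) + 4 * L + L) * (2 ^ (4 * L * (4 * L)))⁻¹ := by
        rw [← pow_mul, pow_add, pow_add, pow_add]; ring
    _ ≤ 2 ^ (4 * L * (4 * L)) * (2 ^ (4 * L * (4 * L)))⁻¹ := by
        gcongr
        · norm_num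
        · nlinarith [Nat.le_mul_self L]
    _ = 1 := ENNReal.mul_inv_cancel (by simp) (by simp)

lemma eight_mul_clog_le_sixteen_mul_logb {N : ℕ} (hN : 2 ≤ N) :
    (8 * Nat.clog 2 N : ℝ) ≤ 16 * Real.logb 2 N := by
  have hlog : 1 ≤ Real.logb 2 N := by
    rw [Real.le_logb_iff_rpow_le (by norm_num) (by positivity), Real.rpow_one]
    exact_mod_cast hN
  have hclog : (Nat.clog 2 N : ℝ) < Real.logb 2 N + 1 := by
    rw [← Real.natCeil_logb_natCast, Nat.cast_ofNat]
    exact Nat.ceil_lt_add_one (by linarith)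
  linarith

/-- Random matrices have logarithmic height: there is a constant `C > 0` such
that for a uniformly random total sign matrix `A ∈ {-1,1}^{N×N}` (encoded by
independent uniform Boolean entries, `true ↦ 1`, `false ↦ -1`), the
probability that `h(A) > C·log₂ N` tends to `0` as `N → ∞`. -/
theorem random_matrix_height_log : ∃ C : ℝ, 0 < C ∧
    Filter.Tendsto (fun N : ℕ =>
      (PMF.uniformOfFintype (Fin N → Fin N → Bool)).toMeasure
        {A | C * Real.logb 2 N <
          (matHeight (fun i j => if A i j then (1 : ℤ) else -1) : ℝ)})
      Filter.atTop (nhds 0) := by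
  refine ⟨16, by norm_num, ?_⟩
  refine tendsto_of_tendsto_of_tendsto_of_le_of_le' tendsto_const_nhds
    ENNReal.tendsto_inv_nat_nhds_zero (Eventually.of_forall fun N => zero_le) ?_
  filter_upwards [eventually_ge_atTop 2] with N hN
  have hheight : ∀ B : Fin N → Fin N → Bool, 16 * Real.logb 2 N < matHeight (signMatrix B) →
      2 * (4 * Nat.clog 2 N) ≤ matHeight (signMatrix B) := fun B hB => by
    have := eight_mul_clog_le_sixteen_mul_logb hN
    exact_mod_cast (show (2 * (4 * Nat.clog 2 N) : ℝ) ≤ matHeight (signMatrix B) by linarith)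
  calc _ ≤ (PMF.uniformOfFintype (Fin N → Fin N → Bool)).toMeasure
          {B | HasRowConstantMinor B (4 * Nat.clog 2 N)} :=
        measure_mono fun B hB => hasRowConstantMinor_of_two_mul_le_matHeight (hheight B hB)
    _ ≤ _ := uniform_hasRowConstantMinor_le _
    _ ≤ (N : ℝ≥0∞)⁻¹ := by
        simpa using minor_union_bound_le_inv (x := N)
          (by exact_mod_cast Nat.le_pow_clog one_lt_two N)
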